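/- (Asymptotics of g'' at the origin) Let g : (0, ∞) → ℝ be defined by g(ξ) = √(ξ tanh ξ). Then g is twice differentiable on (0, ∞) and g''(ξ)/ξ tends to −1 as ξ → 0⁺; in particular |g''(ξ)| is asymptotically equivalent to |ξ| as ξ → 0⁺. -/

import Mathlib

/-! With `h(ξ) = ξ tanh ξ` one has `g'' = (2 h h'' - h'²) / (4 h √h)`. Multiplied by `cosh⁴ ξ`,
the numerator becomes an entire combination of `ξʲ sinh 2ξ`, `ξʲ cosh 2ξ` and `cosh 4ξ` whose
derivatives of order `< 4` vanish at `0` and whose fourth derivative there is `-96`; four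
applications of L'Hôpital's rule give numerator `~ -4 ξ⁴`. Since `h ~ ξ²`, the denominator is
`~ 4 ξ³`, so `g''(ξ) ~ -ξ`. -/

open Real Filter

/-- The function `g(ξ) = √(ξ tanh ξ)`. -/
noncomputable def gWW (ξ : ℝ) : ℝ := Real.sqrt (ξ * Real.tanh ξ)

open Topology

theorem tendsto_div_pow_of_hasDerivAt_chain {f : ℕ → ℝ → ℝ} {n : ℕ}
    (hf : ∀ k < n, ∀ x, HasDerivAt (f k) (f (k + 1) x) x) (hzero : ∀ k < n, f k 0 = 0)
    (hcont : ContinuousAt (f n) 0) :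
    Tendsto (fun x => f 0 x / x ^ n) (𝓝[>] 0) (𝓝 (f n 0 / n.factorial)) := by
  induction n generalizing f with
  | zero => simpa using hcont.tendsto.mono_left nhdsWithin_le_nhds
  | succ n ih =>
    have hshift : Tendsto (fun x => f 1 x / x ^ n) (𝓝[>] 0) (𝓝 (f (n + 1) 0 / n.factorial)) :=
      ih (f := fun k => f (k + 1)) (fun k hk => hf (k + 1) (by omega))
        (fun k hk => hzero (k + 1) (by omega)) hcont
    have hf0 : Tendsto (f 0) (𝓝[>] 0) (𝓝 0) := by
      simpa [hzero 0 n.succ_pos] using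
        ((hf 0 n.succ_pos 0).continuousAt.tendsto.mono_left nhdsWithin_le_nhds)
    have hpow : Tendsto (fun x : ℝ => x ^ (n + 1)) (𝓝[>] 0) (𝓝 0) := by
      simpa using ((continuous_pow (n + 1)).tendsto (0 : ℝ)).mono_left nhdsWithin_le_nhds
    refine HasDerivAt.lhopital_zero_nhdsGT (f' := f 1) (g' := fun x => (n + 1 : ℕ) * x ^ n)
      (.of_forall (hf 0 n.succ_pos)) (.of_forall fun x => by simpa using hasDerivAt_pow (n + 1) x)
      (eventually_mem_nhdsWithin.mono fun x (hx : 0 < x) => by positivity) hf0 hpow ?_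
    convert hshift.div_const (n + 1 : ℕ) using 1
    · ext x; ring
    · push_cast [Nat.factorial_succ]; field_simp

namespace Real

theorem hasDerivAt_tanh (x : ℝ) : HasDerivAt tanh (1 / cosh x ^ 2) x := by
  rw [show tanh = fun y => sinh y / cosh y from funext tanh_eq_sinh_div_cosh]
  refine ((hasDerivAt_sinh x).div (hasDerivAt_cosh x) (cosh_pos x).ne').congr_deriv ?_
  rw [← cosh_sq_sub_sinh_sq x]
  ring

theorem tanh_pos {x : ℝ} (hx : 0 < x) : 0 < tanh x := by
  rw [tanh_eq_sinh_div_cosh]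
  exact div_pos (sinh_pos_iff.2 hx) (cosh_pos x)

theorem tendsto_tanh_div_self : Tendsto (fun x => tanh x / x) (𝓝[≠] 0) (𝓝 1) := by
  simpa [div_eq_inv_mul] using (hasDerivAt_tanh 0).tendsto_slope_zero

end Real

theorem HasDerivAt.hasDerivAt_div_two_sqrt {f f' : ℝ → ℝ} {f'' x : ℝ}
    (hf : HasDerivAt f (f' x) x) (hf' : HasDerivAt f' f'' x) (hx : 0 < f x) :
    HasDerivAt (fun y => f' y / (2 * √(f y)))
      ((2 * f x * f'' - f' x ^ 2) / (4 * f x * √(f x))) x := by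
  have hsqrt : 0 < √(f x) := sqrt_pos.2 hx
  refine (hf'.div ((hf.sqrt hx.ne').const_mul 2) (by positivity)).congr_deriv ?_
  have hsq : √(f x) ^ 2 = f x := sq_sqrt hx.le
  field_simp
  rw [hsq]
  ring

theorem hasDerivAt_mul_tanh (x : ℝ) :
    HasDerivAt (fun y => y * tanh y) (tanh x + x / cosh x ^ 2) x :=
  ((hasDerivAt_id' x).mul (hasDerivAt_tanh x)).congr_deriv (by ring)

theorem hasDerivAt_tanh_add_div_cosh_sq (x : ℝ) :
    HasDerivAt (fun y => tanh y + y / cosh y ^ 2)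
      (2 / cosh x ^ 2 - 2 * x * sinh x / cosh x ^ 3) x := by
  have hcosh := (cosh_pos x).ne'
  refine ((hasDerivAt_tanh x).add ((hasDerivAt_id' x).div ((hasDerivAt_cosh x).fun_pow 2)
    (pow_ne_zero 2 hcosh))).congr_deriv ?_
  field_simp
  ring

/-- `(2 h h'' - h'²) cosh⁴` for `h(ξ) = ξ tanh ξ`, in double angles, and its first four
derivatives. -/
noncomputable def gWWNumerator : ℕ → ℝ → ℝ
  | 0 => fun x => x * sinh (2 * x) - 2 * x ^ 2 * cosh (2 * x) + x ^ 2 - (cosh (4 * x) - 1) / 8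
  | 1 => fun x => sinh (2 * x) - 2 * x * cosh (2 * x) - 4 * x ^ 2 * sinh (2 * x) + 2 * x
      - sinh (4 * x) / 2
  | 2 => fun x => 2 - 12 * x * sinh (2 * x) - 8 * x ^ 2 * cosh (2 * x) - 2 * cosh (4 * x)
  | 3 => fun x => -12 * sinh (2 * x) - 40 * x * cosh (2 * x) - 16 * x ^ 2 * sinh (2 * x)
      - 8 * sinh (4 * x)
  | _ + 4 => fun x => -64 * cosh (2 * x) - 112 * x * sinh (2 * x) - 32 * x ^ 2 * cosh (2 * x)
      - 32 * cosh (4 * x)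

theorem hasDerivAt_gWWNumerator {k : ℕ} (hk : k < 4) (x : ℝ) :
    HasDerivAt (gWWNumerator k) (gWWNumerator (k + 1) x) x := by
  have hsinh (c : ℝ) : HasDerivAt (fun y => sinh (c * y)) (cosh (c * x) * c) x := by
    simpa using ((hasDerivAt_id x).const_mul c).sinh
  have hcosh (c : ℝ) : HasDerivAt (fun y => cosh (c * y)) (sinh (c * x) * c) x := by
    simpa using ((hasDerivAt_id x).const_mul c).cosh
  have hid := hasDerivAt_id' x
  have hsq : HasDerivAt (fun y : ℝ => y ^ 2) (2 * x) x := by simpa using hasDerivAt_pow 2 x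
  interval_cases k
  · exact ((((hid.mul (hsinh 2)).sub ((hsq.const_mul 2).mul (hcosh 2))).add hsq).sub
      (((hcosh 4).sub_const 1).div_const 8)).congr_deriv (by simp only [gWWNumerator]; ring)
  · exact (((((hsinh 2).sub ((hid.const_mul 2).mul (hcosh 2))).sub
      ((hsq.const_mul 4).mul (hsinh 2))).add (hid.const_mul 2)).sub
      ((hsinh 4).div_const 2)).congr_deriv (by simp only [gWWNumerator]; ring)
  · exact ((((hid.const_mul 12).mul (hsinh 2)).const_sub 2).sub
      ((hsq.const_mul 8).mul (hcosh 2)) |>.sub ((hcosh 4).const_mul 2)).congr_deriv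
      (by simp only [gWWNumerator]; ring)
  · exact (((((hsinh 2).const_mul (-12)).sub ((hid.const_mul 40).mul (hcosh 2))).sub
      ((hsq.const_mul 16).mul (hsinh 2))).sub ((hsinh 4).const_mul 8)).congr_deriv
      (by simp only [gWWNumerator]; ring)

theorem gWWNumerator_apply_zero_of_lt {k : ℕ} (hk : k < 4) : gWWNumerator k 0 = 0 := by
  interval_cases k <;> simp [gWWNumerator]

theorem tendsto_gWWNumerator_div_pow :
    Tendsto (fun x => gWWNumerator 0 x / x ^ 4) (𝓝[>] 0) (𝓝 (-4)) := by
  have hlim := tendsto_div_pow_of_hasDerivAt_chain (f := gWWNumerator) (n := 4)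
    (fun _ hk => hasDerivAt_gWWNumerator hk) (fun _ hk => gWWNumerator_apply_zero_of_lt hk)
    (by simp only [gWWNumerator]; fun_prop)
  convert hlim using 2
  norm_num [gWWNumerator, Nat.factorial]

theorem gWWNumerator_zero_eq_mul_cosh_pow_four (x : ℝ) :
    (2 * (x * tanh x) * (2 / cosh x ^ 2 - 2 * x * sinh x / cosh x ^ 3)
      - (tanh x + x / cosh x ^ 2) ^ 2) * cosh x ^ 4 = gWWNumerator 0 x := by
  have hcosh := (cosh_pos x).ne'
  have hcosh4 : cosh (4 * x) = cosh (2 * x) ^ 2 + sinh (2 * x) ^ 2 := by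
    rw [show 4 * x = 2 * (2 * x) by ring, cosh_two_mul]
  simp only [gWWNumerator]
  rw [hcosh4, cosh_two_mul, sinh_two_mul, tanh_eq_sinh_div_cosh]
  field_simp
  linear_combination (cosh x ^ 2 - sinh x ^ 2 + 1 + 16 * x ^ 2) * cosh_sq x

theorem hasDerivAt_gWW {x : ℝ} (hx : 0 < x) :
    HasDerivAt gWW ((tanh x + x / cosh x ^ 2) / (2 * √(x * tanh x))) x :=
  (hasDerivAt_mul_tanh x).sqrt (mul_pos hx (tanh_pos hx)).ne'

theorem hasDerivAt_deriv_gWW {x : ℝ} (hx : 0 < x) :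
    HasDerivAt (deriv gWW)
      (gWWNumerator 0 x / cosh x ^ 4 / (4 * (x * tanh x) * √(x * tanh x))) x := by
  have hderiv : deriv gWW =ᶠ[𝓝 x] fun y => (tanh y + y / cosh y ^ 2) / (2 * √(y * tanh y)) :=
    eventually_gt_nhds hx |>.mono fun y hy => (hasDerivAt_gWW hy).deriv
  rw [← gWWNumerator_zero_eq_mul_cosh_pow_four,
    mul_div_cancel_right₀ _ (pow_ne_zero 4 (cosh_pos x).ne')]
  exact ((hasDerivAt_mul_tanh x).hasDerivAt_div_two_sqrt (f' := fun y => tanh y + y / cosh y ^ 2)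
    (hasDerivAt_tanh_add_div_cosh_sq x) (mul_pos hx (tanh_pos hx))).congr_of_eventuallyEq hderiv

theorem iteratedDeriv_two_gWW_div_self {x : ℝ} (hx : 0 < x) :
    iteratedDeriv 2 gWW x / x
      = gWWNumerator 0 x / x ^ 4 / (4 * cosh x ^ 4 * (tanh x / x * √(tanh x / x))) := by
  have hsqrt : √(x * tanh x) = x * √(tanh x / x) := by
    rw [show x * tanh x = x ^ 2 * (tanh x / x) by field_simp, sqrt_mul (sq_nonneg x),
      sqrt_sq hx.le]
  have hpos : 0 < √(tanh x / x) := sqrt_pos.2 (div_pos (tanh_pos hx) hx)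
  have hcosh := (cosh_pos x).ne'
  rw [iteratedDeriv_succ, iteratedDeriv_one, (hasDerivAt_deriv_gWW hx).deriv, hsqrt]
  field_simp

/-- Asymptotics of `g''` at the origin: `g` is twice differentiable on `(0,∞)` and
`g''(ξ)/ξ → −1` as `ξ → 0⁺`; in particular `|g''(ξ)| ~ |ξ|` as `ξ → 0⁺`. -/
theorem g_second_deriv_asymptotics_at_zero :
    (∀ ξ : ℝ, 0 < ξ → DifferentiableAt ℝ gWW ξ) ∧
    (∀ ξ : ℝ, 0 < ξ → DifferentiableAt ℝ (deriv gWW) ξ) ∧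
    Filter.Tendsto (fun ξ : ℝ => iteratedDeriv 2 gWW ξ / ξ)
      (nhdsWithin 0 (Set.Ioi 0)) (nhds (-1)) := by
  refine ⟨fun ξ hξ => (hasDerivAt_gWW hξ).differentiableAt,
    fun ξ hξ => (hasDerivAt_deriv_gWW hξ).differentiableAt, ?_⟩
  have htanh : Tendsto (fun x => tanh x / x) (𝓝[>] 0) (𝓝 1) :=
    tendsto_tanh_div_self.mono_left (nhdsWithin_mono 0 fun _ hx => ne_of_gt hx)
  have hcosh : Tendsto (fun x => cosh x ^ 4) (𝓝[>] 0) (𝓝 1) :=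
    ((continuous_cosh.pow 4).tendsto' 0 1 (by simp)).mono_left nhdsWithin_le_nhds
  have hlim := tendsto_gWWNumerator_div_pow.div ((hcosh.const_mul 4).mul (htanh.mul htanh.sqrt))
    (by norm_num)
  norm_num at hlim
  exact hlim.congr' (eventually_mem_nhdsWithin.mono fun x hx =>
    (iteratedDeriv_two_gWW_div_self hx).symm)
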